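/- There is a universal constant C > 0 such that the following holds. Let X ~ Bin(p_1,…,p_n) with d = Σ p_i > 0 and p_max = max_i p_i ≥ d/n. Then for every integer k with 2d ≤ k ≤ (d/p_max)^{2/5}/C, P(X > k) ≤ C (d/k + p_max k^{5/2}/d) · P(X = k). -/

import Mathlib

open Finset Real

/-
Splitting off one coordinate, `P_{s ∪ {a}}(t) = p_a P_s(t - 1) + (1 - p_a) P_s(t)`, and inducting
over the coordinates gives `(t + 1)(1 - p_max) P(X = t + 1) ≤ d P(X = t)`. For `t ≥ k` the ratio
`P(X = t + 1) / P(X = t)` is therefore at most `q = d / ((k + 1)(1 - p_max))`, and the tail is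
dominated by a geometric series: `P(X > k) ≤ q / (1 - q) P(X = k)`. Since `p_max ≤ d`, the condition
`k ≤ (d / p_max)^{2/5} / C` forces `p_max ≤ 1/8`, and `k ≥ 2d` then gives `q ≤ 4/7` and
`q / (1 - q) ≤ 8d / 3k`, so `C = 4` works.
-/

/-- The probability that the sum of independent Bernoulli(`p l`) variables over
indices `l ∈ s` equals `t` (zero for `t < 0`). -/
noncomputable def binProbOn {ι : Type*} [DecidableEq ι] (s : Finset ι) (p : ι → ℝ) (t : ℤ) : ℝ :=
  ∑ S ∈ s.powerset.filter (fun S => (S.card : ℤ) = t), (∏ l ∈ S, p l) * ∏ l ∈ s \ S, (1 - p l)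

section binProbOn

variable {ι : Type*} [DecidableEq ι] (p : ι → ℝ)

lemma binProbOn_empty (t : ℤ) : binProbOn ∅ p t = if t = 0 then 1 else 0 := by
  by_cases ht : t = 0 <;> simp [binProbOn, filter_singleton, ht, eq_comm]

lemma binProbOn_insert {a : ι} {s : Finset ι} (ha : a ∉ s) (t : ℤ) :
    binProbOn (insert a s) p t = p a * binProbOn s p (t - 1) + (1 - p a) * binProbOn s p t := by
  simp only [binProbOn, sum_filter, sum_powerset_insert ha, mul_sum]
  rw [add_comm]
  congr 1 <;> refine sum_congr rfl fun S hS => ?_ <;>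
    have haS : a ∉ S := fun h => ha (mem_powerset.1 hS h)
  · rw [card_insert_of_notMem haS, prod_insert haS, insert_sdiff_insert, sdiff_insert_of_notMem ha]
    simp only [Nat.cast_succ, eq_sub_iff_add_eq]
    split_ifs <;> ring
  · rw [insert_sdiff_of_notMem _ haS, prod_insert (fun h => ha (mem_sdiff.1 h).1)]
    split_ifs <;> ring

lemma binProbOn_nonneg {s : Finset ι} (hp : ∀ l ∈ s, 0 ≤ p l ∧ p l ≤ 1) (t : ℤ) :
    0 ≤ binProbOn s p t :=
  sum_nonneg fun _ hS => mul_nonneg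
    (prod_nonneg fun l hl => (hp l (mem_powerset.1 (mem_filter.1 hS).1 hl)).1)
    (prod_nonneg fun l hl => sub_nonneg.2 (hp l (mem_sdiff.1 hl).1).2)

lemma binProbOn_eq_zero_of_card_lt {s : Finset ι} {t : ℤ} (ht : s.card < t) :
    binProbOn s p t = 0 := by
  refine sum_eq_zero fun S hS => absurd (mem_filter.1 hS).2 ?_
  have := card_le_card (mem_powerset.1 (mem_filter.1 hS).1)
  omega

lemma succ_mul_binProbOn_succ_le {s : Finset ι} {pm : ℝ} (hp : ∀ l ∈ s, 0 ≤ p l ∧ p l ≤ 1)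
    (hpm : ∀ l ∈ s, p l ≤ pm) (t : ℤ) :
    (t + 1) * (1 - pm) * binProbOn s p (t + 1) ≤ (∑ l ∈ s, p l) * binProbOn s p t := by
  induction s using Finset.induction_on generalizing t with
  | empty =>
    by_cases ht : t + 1 = 0
    · simp [binProbOn_empty, show (t : ℝ) + 1 = 0 by exact_mod_cast ht]
    · simp [binProbOn_empty, ht]
  | @insert a s ha ih =>
    have hp' : ∀ l ∈ s, 0 ≤ p l ∧ p l ≤ 1 := fun l hl => hp l (mem_insert_of_mem hl)
    have hpm' : ∀ l ∈ s, p l ≤ pm := fun l hl => hpm l (mem_insert_of_mem hl)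
    obtain ⟨hpa0, hpa1⟩ := hp a (mem_insert_self a s)
    have hpam := hpm a (mem_insert_self a s)
    have ih₀ := ih hp' hpm' t
    have ih₁ := ih hp' hpm' (t - 1)
    have h₀ := binProbOn_nonneg p hp' t
    have h₁ := binProbOn_nonneg p hp' (t - 1)
    push_cast [sub_add_cancel] at ih₁
    rw [binProbOn_insert p ha, binProbOn_insert p ha, sum_insert ha, add_sub_cancel_right]
    -- beyond the two induction hypotheses only `p a (p a - pm) P(t) ≤ p a ^ 2 P(t - 1)` is needed
    nlinarith [mul_le_mul_of_nonneg_left ih₀ (sub_nonneg.2 hpa1), mul_le_mul_of_nonneg_left ih₁ hpa0,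
      mul_nonneg (mul_nonneg hpa0 h₀) (sub_nonneg.2 hpam), mul_nonneg (mul_nonneg hpa0 hpa0) h₁]

lemma binProbOn_succ_le {s : Finset ι} {pm : ℝ} (hp : ∀ l ∈ s, 0 ≤ p l ∧ p l ≤ 1)
    (hpm : ∀ l ∈ s, p l ≤ pm) (hpm1 : pm < 1) {k t : ℤ} (hk : 0 ≤ k) (hkt : k ≤ t) :
    binProbOn s p (t + 1) ≤ (∑ l ∈ s, p l) / ((k + 1) * (1 - pm)) * binProbOn s p t := by
  have hk' : (0 : ℝ) ≤ k := by exact_mod_cast hk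
  have hkt' : (k : ℝ) ≤ t := by exact_mod_cast hkt
  rw [div_mul_eq_mul_div, le_div_iff₀ (by nlinarith)]
  calc binProbOn s p (t + 1) * ((k + 1) * (1 - pm))
      ≤ (t + 1) * (1 - pm) * binProbOn s p (t + 1) := by
        nlinarith [mul_nonneg (mul_nonneg (sub_nonneg.2 hkt') (sub_nonneg.2 hpm1.le))
          (binProbOn_nonneg p hp (t + 1))]
    _ ≤ (∑ l ∈ s, p l) * binProbOn s p t := succ_mul_binProbOn_succ_le p hp hpm t

end binProbOn

lemma sum_range_succ_le_of_le_mul {a : ℕ → ℝ} {q : ℝ} (hq0 : 0 ≤ q) (hq1 : q < 1)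
    (ha0 : 0 ≤ a 0) (ha : ∀ j, a (j + 1) ≤ q * a j) (N : ℕ) :
    ∑ j ∈ range N, a (j + 1) ≤ q / (1 - q) * a 0 := by
  have hpow : ∀ j, a j ≤ q ^ j * a 0 := by
    intro j
    induction j with
    | zero => simp
    | succ j ih => calc
        a (j + 1) ≤ q * a j := ha j
        _ ≤ q * (q ^ j * a 0) := mul_le_mul_of_nonneg_left ih hq0
        _ = q ^ (j + 1) * a 0 := by ring
  calc ∑ j ∈ range N, a (j + 1) ≤ ∑ j ∈ range N, q ^ (j + 1) * a 0 :=
        sum_le_sum fun j _ => hpow (j + 1)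
    _ = q * (∑ j ∈ Ico 0 N, q ^ j) * a 0 := by
        rw [← range_eq_Ico, mul_sum, sum_mul]
        simp only [pow_succ']
    _ ≤ q * (q ^ 0 / (1 - q)) * a 0 := by
        gcongr
        exact geom_sum_Ico_le_of_lt_one hq0 hq1
    _ = q / (1 - q) * a 0 := by ring

lemma tsum_ite_lt_eq_sum_range (f : ℤ → ℝ) (k : ℤ) (N : ℕ) (hf : ∀ t, k + N < t → f t = 0) :
    ∑' t, (if k < t then f t else 0) = ∑ j ∈ range N, f (k + (j + 1 : ℕ)) := by
  have hsupp : ∀ t ∉ (range N).image (fun j : ℕ => k + (j + 1 : ℕ)),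
      (if k < t then f t else 0) = 0 := by
    intro t ht
    split_ifs with hkt
    · refine hf t (not_le.1 fun htN => ht (mem_image.2 ⟨(t - k - 1).toNat, ?_, ?_⟩))
      · rw [mem_range]; omega
      · omega
    · rfl
  rw [tsum_eq_sum hsupp, sum_image fun i _ j _ h => by simpa using h]
  exact sum_congr rfl fun j _ => if_pos (by omega)

lemma le_inv_of_mul_le_div_rpow {c d m r : ℝ} (hc : 0 < c) (hm : 0 < m) (hmd : m ≤ d)
    (hr : r ≤ 1) (h : c * d ≤ (d / m) ^ r) : m ≤ c⁻¹ := by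
  have hx : 1 ≤ d / m := (one_le_div hm).2 hmd
  have hcd : c * d ≤ d / m := h.trans (by simpa using rpow_le_rpow_of_exponent_le hx hr)
  rw [le_div_iff₀ hm] at hcd
  have hd : 0 < d := hm.trans_le hmd
  rw [← one_div, le_div_iff₀ hc]
  nlinarith

theorem stmt_17 : ∃ C : ℝ, 0 < C ∧
    ∀ (n : ℕ) (p : Fin n → ℝ), (∀ l, 0 ≤ p l ∧ p l ≤ 1) →
    ∀ d pmax : ℝ, d = ∑ l, p l → 0 < d →
    (∀ l, p l ≤ pmax) → (∃ l, p l = pmax) → d / n ≤ pmax →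
    ∀ k : ℕ, 2 * d ≤ k → (k : ℝ) ≤ (d / pmax) ^ ((2 : ℝ) / 5) / C →
    (∑' t : ℤ, if (k : ℤ) < t then binProbOn Finset.univ p t else 0) ≤
      C * (d / k + pmax * (k : ℝ) ^ ((5 : ℝ) / 2) / d) * binProbOn Finset.univ p (k : ℤ) := by
  refine ⟨4, by norm_num, ?_⟩
  intro n p hp d pmax hd hd0 hpmax ⟨l0, hl0⟩ _ k hk2 hkC
  have hp' : ∀ l ∈ univ, 0 ≤ p l ∧ p l ≤ 1 := fun l _ => hp l
  have hpm_le_d : pmax ≤ d := hl0 ▸ hd ▸ single_le_sum (fun l _ => (hp l).1) (mem_univ l0)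
  have hpm_pos : 0 < pmax := by
    by_contra! h
    linarith [sum_nonpos fun l (_ : l ∈ univ) => (hpmax l).trans h]
  have hpm8 : pmax ≤ 8⁻¹ := le_inv_of_mul_le_div_rpow (r := 2 / 5) (by norm_num) hpm_pos hpm_le_d
    (by norm_num) (by linarith [(le_div_iff₀ four_pos).1 hkC])
  have hk : (0 : ℝ) < k := by linarith
  have hc : 0 < ((k : ℝ) + 1) * (1 - pmax) := by nlinarith
  set q := d / ((k + 1) * (1 - pmax))
  have hq : q ≤ 8 / 7 * (d / k) := calc
    q ≤ d / (7 / 8 * k) := div_le_div_of_nonneg_left hd0.le (by positivity) (by nlinarith)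
    _ = 8 / 7 * (d / k) := by ring
  have hdk : d / k ≤ 1 / 2 := by rw [div_le_iff₀ hk]; linarith
  have hstep (j : ℕ) : binProbOn univ p (k + (j + 1 : ℕ)) ≤ q * binProbOn univ p (k + j) := by
    simpa [← hd, add_assoc] using binProbOn_succ_le p hp' (fun l _ => hpmax l) (by linarith)
      (Int.natCast_nonneg k) (le_add_of_nonneg_right (Int.natCast_nonneg j))
  have hratio : q / (1 - q) ≤ 4 * (d / k + pmax * (k : ℝ) ^ ((5 : ℝ) / 2) / d) := calc
    q / (1 - q) ≤ (8 / 7 * (d / k)) / (3 / 7) :=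
      div_le_div₀ (by positivity) hq (by norm_num) (by linarith)
    _ ≤ 4 * (d / k + pmax * (k : ℝ) ^ ((5 : ℝ) / 2) / d) := by
      linarith [div_nonneg hd0.le hk.le, show 0 ≤ pmax * (k : ℝ) ^ ((5 : ℝ) / 2) / d by positivity]
  rw [tsum_ite_lt_eq_sum_range _ k n fun t ht =>
    binProbOn_eq_zero_of_card_lt p (by rw [card_univ, Fintype.card_fin]; omega)]
  calc ∑ j ∈ range n, binProbOn univ p (k + (j + 1 : ℕ))
      ≤ q / (1 - q) * binProbOn univ p k :=
        sum_range_succ_le_of_le_mul (a := fun j : ℕ => binProbOn univ p (k + j))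
          (div_nonneg hd0.le hc.le) (by linarith) (by simpa using binProbOn_nonneg p hp' k) hstep n
    _ ≤ 4 * (d / k + pmax * (k : ℝ) ^ ((5 : ℝ) / 2) / d) * binProbOn univ p k :=
        mul_le_mul_of_nonneg_right hratio (binProbOn_nonneg p hp' k)
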